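/- Define the measure ω(E) = m(E \ B(0,1)) on ℝⁿ (Lebesgue measure with the unit ball removed). Then ω is not doubling, but ω satisfies the C_p condition for every 1 < p < ∞. -/

import Mathlib

open MeasureTheory ENNReal

structure Cube (n : ℕ) where
  c : Fin n → ℝ
  r : ℝ
  hr : 0 < r

namespace Cube

def set {n : ℕ} (I : Cube n) : Set (Fin n → ℝ) :=
  {x | ∀ i, I.c i - I.r ≤ x i ∧ x i < I.c i + I.r}

noncomputable def side {n : ℕ} (I : Cube n) : ℝ := 2 * I.r

noncomputable def vol {n : ℕ} (I : Cube n) : ℝ := (2 * I.r) ^ n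

def double {n : ℕ} (I : Cube n) : Cube n := ⟨I.c, 2 * I.r, by have := I.hr; linarith⟩

def triple {n : ℕ} (I : Cube n) : Cube n := ⟨I.c, 3 * I.r, by have := I.hr; linarith⟩

end Cube

noncomputable def poisson {n : ℕ} (I : Cube n) (ω : Measure (Fin n → ℝ)) : ℝ≥0∞ :=
  ∫⁻ x, (ENNReal.ofReal (I.side / (I.side + Metric.infDist x I.set) ^ 2)) ^ n ∂ω

noncomputable def maximal {n : ℕ} (μ : Measure (Fin n → ℝ)) (x : Fin n → ℝ) : ℝ≥0∞ :=
  ⨆ (I : Cube n) (_ : x ∈ I.set), μ I.set / ENNReal.ofReal I.vol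

noncomputable def wMass {n : ℕ} (w : (Fin n → ℝ) → ℝ≥0∞) (E : Set (Fin n → ℝ)) : ℝ≥0∞ :=
  ∫⁻ x in E, w x

/-! The sup-norm ball `B(0,1)` is the open cube `(-1,1)ⁿ`, so the cube of radius `3/4` at the
origin is `ω`-null while its double is not. For `C_p`: `M 1_I(x) ≤ (4r / (r + ‖x - c‖))ⁿ` decays
like `‖x‖⁻ⁿ`, so `(M 1_I)^p` is integrable when `p > 1`. If `I` contains a point `y` outside the
ball, the box of side `2r` at `y` pointing away from the origin lies outside the ball and carries
`M 1_I ≥ 4⁻ⁿ`, so `∫ (M 1_I)^p dω ≥ 4^(-np) |I|`, and `ω(E) ≤ |E|` gives the bound with `ε = 1`;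
otherwise `ω(E) = 0`. -/

lemma min_pow_le_div_pow_mul_pow (n : ℕ) {r t D : ℝ} (hr : 0 < r) (ht : 0 < t) (hD : 0 ≤ D)
    (h : D - r ≤ t) : min (t ^ n) ((2 * r) ^ n) ≤ (4 * r / (r + D)) ^ n * t ^ n := by
  rcases le_or_gt D (3 * r) with hnear | hfar
  · calc min (t ^ n) ((2 * r) ^ n) ≤ 1 * t ^ n := by rw [one_mul]; exact min_le_left _ _
      _ ≤ (4 * r / (r + D)) ^ n * t ^ n := by
          gcongr
          exact one_le_pow₀ ((le_div_iff₀ (by linarith)).2 (by linarith))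
  · calc min (t ^ n) ((2 * r) ^ n) ≤ (2 * r) ^ n := min_le_right _ _
      _ ≤ (4 * r / (r + D) * t) ^ n := by
          refine pow_le_pow_left₀ (by linarith) ?_ n
          rw [div_mul_eq_mul_div, le_div_iff₀ (by linarith)]
          nlinarith
      _ = (4 * r / (r + D)) ^ n * t ^ n := mul_pow _ _ _

lemma exists_Icc_abs_le_abs (a : ℝ) {L : ℝ} (hL : 0 ≤ L) :
    ∃ b, ∀ t ∈ Set.Icc b (b + L), |a| ≤ |t| ∧ |t - a| ≤ L := by
  rcases le_total 0 a with ha | ha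
  · refine ⟨a, fun t ht => ?_⟩
    rw [abs_of_nonneg ha, abs_of_nonneg (ha.trans ht.1), abs_le]
    refine ⟨?_, ?_, ?_⟩ <;> linarith [ht.1, ht.2]
  · refine ⟨a - L, fun t ht => ?_⟩
    rw [abs_of_nonpos ha, abs_of_nonpos (by linarith [ht.2]), abs_le]
    refine ⟨?_, ?_, ?_⟩ <;> linarith [ht.1, ht.2]

lemma exists_box_norm_le_norm {ι : Type*} [Fintype ι] (y : ι → ℝ) {L : ℝ} (hL : 0 ≤ L) :
    ∃ S : Set (ι → ℝ), MeasurableSet S ∧ volume S = ENNReal.ofReal (L ^ Fintype.card ι) ∧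
      ∀ x ∈ S, ‖y‖ ≤ ‖x‖ ∧ ‖x - y‖ ≤ L := by
  choose b hb using fun i => exists_Icc_abs_le_abs (y i) hL
  refine ⟨Set.Icc b (b + fun _ => L), measurableSet_Icc, ?_, fun x hx => ?_⟩
  · simp [Real.volume_Icc_pi, ENNReal.ofReal_pow hL]
  have hxi := fun i => hb i (x i) ⟨hx.1 i, by simpa using hx.2 i⟩
  refine ⟨(pi_norm_le_iff_of_nonneg (norm_nonneg x)).2 fun i => ?_,
    (pi_norm_le_iff_of_nonneg hL).2 fun i => ?_⟩
  · rw [Real.norm_eq_abs]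
    exact (hxi i).1.trans ((Real.norm_eq_abs (x i)).symm.trans_le (norm_le_pi_norm x i))
  · simpa only [Pi.sub_apply, Real.norm_eq_abs] using (hxi i).2

lemma restrict_compl_eq_zero_of_subset {α : Type*} [MeasurableSpace α] {μ : Measure α}
    {s t : Set α} (ht : MeasurableSet t) (hst : s ⊆ t) : μ.restrict tᶜ s = 0 := by
  rw [Measure.restrict_apply' ht.compl, ← Set.sdiff_eq, Set.sdiff_eq_empty.2 hst, measure_empty]

lemma restrict_compl_ne_zero_of_lt {α : Type*} [MeasurableSpace α] {μ : Measure α}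
    {s t : Set α} (ht : MeasurableSet t) (hts : μ t < μ s) : μ.restrict tᶜ s ≠ 0 := by
  rw [Measure.restrict_apply' ht.compl, ← Set.sdiff_eq]
  exact (tsub_pos_of_lt hts).trans_le le_measure_sdiff |>.ne'

namespace Cube

variable {n : ℕ}

lemma set_eq_pi (I : Cube n) :
    I.set = Set.univ.pi fun i => Set.Ico (I.c i - I.r) (I.c i + I.r) := by
  ext x; simp [Cube.set, Set.mem_pi]

lemma measurableSet_set (I : Cube n) : MeasurableSet I.set := by
  rw [set_eq_pi]; exact MeasurableSet.univ_pi fun _ => measurableSet_Ico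

lemma vol_pos (I : Cube n) : 0 < I.vol := pow_pos (by linarith [I.hr]) n

lemma volume_set (I : Cube n) : volume I.set = ENNReal.ofReal I.vol := by
  have hside : ∀ i, I.c i + I.r - (I.c i - I.r) = 2 * I.r := fun i => by ring
  simp only [set_eq_pi, volume_pi_pi, Real.volume_Ico, hside, Finset.prod_const,
    Finset.card_univ, Fintype.card_fin, vol,
    ENNReal.ofReal_pow (by linarith [I.hr] : (0:ℝ) ≤ 2 * I.r)]

lemma norm_sub_center_le (I : Cube n) {x : Fin n → ℝ} (hx : x ∈ I.set) : ‖x - I.c‖ ≤ I.r := by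
  refine (pi_norm_le_iff_of_nonneg I.hr.le).2 fun i => ?_
  rw [Pi.sub_apply, Real.norm_eq_abs, abs_le]
  constructor <;> linarith [hx i]

lemma mem_set_of_norm_sub_lt (I : Cube n) {x : Fin n → ℝ} (hx : ‖x - I.c‖ < I.r) :
    x ∈ I.set := fun i => by
  have hi := (norm_le_pi_norm (x - I.c) i).trans_lt hx
  rw [Pi.sub_apply, Real.norm_eq_abs, abs_lt] at hi
  constructor <;> linarith [hi.1, hi.2]

lemma norm_sub_lt_two_mul (I : Cube n) {x y : Fin n → ℝ} (hx : x ∈ I.set) (hy : y ∈ I.set) :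
    ‖x - y‖ < 2 * I.r := by
  refine (pi_norm_lt_iff (by linarith [I.hr])).2 fun i => ?_
  rw [Pi.sub_apply, Real.norm_eq_abs, abs_lt]
  constructor <;> linarith [hx i, hy i]

end Cube

variable {n : ℕ}

lemma le_maximal_of_subset {I J : Cube n} (hIJ : I.set ⊆ J.set) {x : Fin n → ℝ}
    (hx : x ∈ J.set) : ENNReal.ofReal (I.vol / J.vol) ≤ maximal (volume.restrict I.set) x := by
  refine Eq.trans_le ?_ (le_iSup₂ (f := fun (J : Cube n) (_ : x ∈ J.set) =>
    (volume.restrict I.set) J.set / ENNReal.ofReal J.vol) J hx)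
  rw [Measure.restrict_apply J.measurableSet_set, Set.inter_eq_right.2 hIJ, I.volume_set,
    ENNReal.ofReal_div_of_pos J.vol_pos]

lemma le_maximal_of_norm_sub_le (I : Cube n) {x y : Fin n → ℝ} (hy : y ∈ I.set)
    (hxy : ‖x - y‖ ≤ 2 * I.r) :
    ENNReal.ofReal (4 ^ n)⁻¹ ≤ maximal (volume.restrict I.set) x := by
  let J : Cube n := ⟨x, 4 * I.r, by linarith [I.hr]⟩
  have hIJ : I.set ⊆ J.set := fun z hz => J.mem_set_of_norm_sub_lt <|
    calc ‖z - x‖ ≤ ‖z - y‖ + ‖y - x‖ := norm_sub_le_norm_sub_add_norm_sub z y x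
      _ < 2 * I.r + 2 * I.r := add_lt_add_of_lt_of_le (I.norm_sub_lt_two_mul hz hy)
          (by rwa [norm_sub_rev])
      _ = J.r := by ring
  have hxJ : x ∈ J.set := J.mem_set_of_norm_sub_lt (by simp [J, I.hr])
  have hratio : I.vol / J.vol = (4 ^ n)⁻¹ := by
    rw [Cube.vol, Cube.vol, ← div_pow, ← inv_pow, show J.r = 4 * I.r from rfl]
    congr 1
    field_simp [I.hr.ne']
  simpa only [hratio] using le_maximal_of_subset hIJ hxJ

lemma volume_inter_le_of_mem (I J : Cube n) {x : Fin n → ℝ} (hx : x ∈ J.set) :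
    volume (J.set ∩ I.set) ≤
      ENNReal.ofReal ((4 * I.r / (I.r + ‖x - I.c‖)) ^ n) * ENNReal.ofReal J.vol := by
  rcases (J.set ∩ I.set).eq_empty_or_nonempty with hempty | ⟨z, hzJ, hzI⟩
  · simp [hempty]
  have hfar : ‖x - I.c‖ - I.r ≤ 2 * J.r :=
    calc ‖x - I.c‖ - I.r ≤ ‖x - z‖ + ‖z - I.c‖ - I.r := by
          gcongr; exact norm_sub_le_norm_sub_add_norm_sub x z I.c
      _ ≤ 2 * J.r := by linarith [I.norm_sub_center_le hzI, (J.norm_sub_lt_two_mul hx hzJ).le]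
  have hratio_nonneg : 0 ≤ 4 * I.r / (I.r + ‖x - I.c‖) := by have := I.hr; positivity
  calc volume (J.set ∩ I.set) ≤ min (volume J.set) (volume I.set) :=
        le_min (measure_mono Set.inter_subset_left) (measure_mono Set.inter_subset_right)
    _ = ENNReal.ofReal (min J.vol I.vol) := by rw [J.volume_set, I.volume_set, ENNReal.ofReal_min]
    _ ≤ ENNReal.ofReal ((4 * I.r / (I.r + ‖x - I.c‖)) ^ n * J.vol) :=
        ENNReal.ofReal_le_ofReal <| min_pow_le_div_pow_mul_pow n I.hr (by linarith [J.hr])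
          (norm_nonneg _) hfar
    _ = _ := ENNReal.ofReal_mul (pow_nonneg hratio_nonneg n)

lemma maximal_restrict_le (I : Cube n) (x : Fin n → ℝ) :
    maximal (volume.restrict I.set) x ≤ ENNReal.ofReal ((4 * I.r / (I.r + ‖x - I.c‖)) ^ n) :=
  iSup₂_le fun J hx => by
    rw [Measure.restrict_apply J.measurableSet_set]
    exact ENNReal.div_le_of_le_mul (volume_inter_le_of_mem I J hx)

lemma maximal_restrict_le_div_one_add_norm (I : Cube n) (x : Fin n → ℝ) :
    maximal (volume.restrict I.set) x ≤
      ENNReal.ofReal ((4 * (1 + I.r + ‖I.c‖) / (1 + ‖x‖)) ^ n) := by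
  have hr := I.hr
  refine (maximal_restrict_le I x).trans <| ENNReal.ofReal_le_ofReal <|
    pow_le_pow_left₀ (by positivity) ?_ n
  rw [div_le_div_iff₀ (by positivity) (by positivity)]
  nlinarith [norm_sub_norm_le x I.c, norm_nonneg (x - I.c), norm_nonneg I.c, norm_nonneg x,
    mul_nonneg hr.le (sub_nonneg.2 (norm_sub_norm_le x I.c))]

lemma lintegral_maximal_restrict_rpow_lt_top (hn : 0 < n) {p : ℝ} (hp : 1 < p) (I : Cube n)
    {μ : Measure (Fin n → ℝ)} (hμ : μ ≤ volume) :
    ∫⁻ x, maximal (volume.restrict I.set) x ^ p ∂μ < ⊤ := by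
  set K := 4 * (1 + I.r + ‖I.c‖)
  have hK : 0 < K := by have := I.hr; positivity
  have hdecay : ∀ x, maximal (volume.restrict I.set) x ^ p ≤
      ENNReal.ofReal (K ^ (n * p)) * ENNReal.ofReal ((1 + ‖x‖) ^ (-(n * p))) := fun x => by
    have hx : 0 < 1 + ‖x‖ := by positivity
    calc maximal (volume.restrict I.set) x ^ p ≤ ENNReal.ofReal ((K / (1 + ‖x‖)) ^ n) ^ p :=
          ENNReal.rpow_le_rpow (maximal_restrict_le_div_one_add_norm I x) (by linarith)
      _ = ENNReal.ofReal (K ^ (n * p) * (1 + ‖x‖) ^ (-(n * p))) := by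
          rw [ENNReal.ofReal_rpow_of_nonneg (by positivity) (by linarith), ← Real.rpow_natCast,
            ← Real.rpow_mul (by positivity), Real.div_rpow hK.le hx.le, Real.rpow_neg hx.le,
            div_eq_mul_inv]
      _ = _ := ENNReal.ofReal_mul (by positivity)
  calc ∫⁻ x, maximal (volume.restrict I.set) x ^ p ∂μ
      ≤ ∫⁻ x, maximal (volume.restrict I.set) x ^ p := lintegral_mono' hμ le_rfl
    _ ≤ ∫⁻ x, ENNReal.ofReal (K ^ (n * p)) * ENNReal.ofReal ((1 + ‖x‖) ^ (-(n * p))) :=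
        lintegral_mono hdecay
    _ = ENNReal.ofReal (K ^ (n * p)) * ∫⁻ x, ENNReal.ofReal ((1 + ‖x‖) ^ (-(n * p))) :=
        lintegral_const_mul' _ _ ENNReal.ofReal_ne_top
    _ < ⊤ := ENNReal.mul_lt_top ENNReal.ofReal_lt_top <| finite_integral_one_add_norm <| by
        rw [Module.finrank_fin_fun]; exact lt_mul_of_one_lt_right (Nat.cast_pos.2 hn) hp

lemma ofReal_le_lintegral_maximal_restrict_rpow {p : ℝ} (hp : 0 ≤ p) (I : Cube n) {R : ℝ}
    {y : Fin n → ℝ} (hyI : y ∈ I.set) (hy : R ≤ ‖y‖) :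
    ENNReal.ofReal ((4 ^ n)⁻¹ ^ p * I.vol) ≤
      ∫⁻ x, maximal (volume.restrict I.set) x ^ p ∂volume.restrict (Metric.ball 0 R)ᶜ := by
  obtain ⟨S, hSm, hSvol, hS⟩ := exists_box_norm_le_norm y (by linarith [I.hr] : 0 ≤ 2 * I.r)
  have hSout : S ⊆ (Metric.ball 0 R)ᶜ := fun x hx => by
    simpa using hy.trans (hS x hx).1
  calc ENNReal.ofReal ((4 ^ n)⁻¹ ^ p * I.vol)
      = ∫⁻ _ in S, ENNReal.ofReal (4 ^ n)⁻¹ ^ p ∂volume.restrict (Metric.ball 0 R)ᶜ := by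
        rw [setLIntegral_const, Measure.restrict_apply hSm, Set.inter_eq_left.2 hSout, hSvol,
          ENNReal.ofReal_rpow_of_nonneg (by positivity) hp, ← ENNReal.ofReal_mul (by positivity),
          Fintype.card_fin, Cube.vol]
    _ ≤ ∫⁻ x in S, maximal (volume.restrict I.set) x ^ p ∂volume.restrict (Metric.ball 0 R)ᶜ :=
        setLIntegral_mono' hSm fun x hx =>
          ENNReal.rpow_le_rpow (le_maximal_of_norm_sub_le I hyI (hS x hx).2) hp
    _ ≤ _ := setLIntegral_le_lintegral _ _

lemma exists_cube_restrict_compl_ball_eq_zero_double_ne_zero (hn : 0 < n) {R : ℝ} (hR : 0 < R) :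
    ∃ I : Cube n, volume.restrict (Metric.ball 0 R)ᶜ I.set = 0 ∧
      volume.restrict (Metric.ball 0 R)ᶜ I.double.set ≠ 0 := by
  let I : Cube n := ⟨0, 3 / 4 * R, by positivity⟩
  refine ⟨I, restrict_compl_eq_zero_of_subset Metric.isOpen_ball.measurableSet fun x hx => ?_,
    restrict_compl_ne_zero_of_lt Metric.isOpen_ball.measurableSet ?_⟩
  · simpa [I] using (I.norm_sub_center_le hx).trans_lt (by linarith : 3 / 4 * R < R)
  rw [Real.volume_pi_ball _ hR, I.double.volume_set, Fintype.card_fin]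
  refine ENNReal.ofReal_lt_ofReal_iff'.2 ⟨?_, I.double.vol_pos⟩
  exact pow_lt_pow_left₀ (by simp only [Cube.double, I]; linarith) (by positivity) hn.ne'

lemma restrict_compl_ball_le_mul_lintegral_maximal_restrict_rpow {p : ℝ} (hp : 0 ≤ p)
    (I : Cube n) {R : ℝ} {E : Set (Fin n → ℝ)} (hEI : E ⊆ I.set) (hE : volume E ≠ ⊤) :
    volume.restrict (Metric.ball 0 R)ᶜ E ≤
      ENNReal.ofReal (4 ^ (n * p) * ((volume E).toReal / I.vol)) *
        ∫⁻ x, maximal (volume.restrict I.set) x ^ p ∂volume.restrict (Metric.ball 0 R)ᶜ := by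
  by_cases hmeet : ∃ y ∈ I.set, R ≤ ‖y‖
  · obtain ⟨y, hyI, hy⟩ := hmeet
    have hV := I.vol_pos
    have hcancel : (4 : ℝ) ^ (n * p) * (4 ^ n)⁻¹ ^ p = 1 := by
      rw [Real.inv_rpow (by positivity), ← Real.rpow_natCast, ← Real.rpow_mul (by norm_num),
        mul_inv_cancel₀ (by positivity)]
    calc volume.restrict (Metric.ball 0 R)ᶜ E ≤ volume E := Measure.restrict_apply_le _ _
      _ = ENNReal.ofReal ((4 ^ (n * p) * ((volume E).toReal / I.vol)) *
            ((4 ^ n)⁻¹ ^ p * I.vol)) := by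
        rw [mul_mul_mul_comm, hcancel, one_mul, div_mul_cancel₀ _ hV.ne',
          ENNReal.ofReal_toReal hE]
      _ = ENNReal.ofReal (4 ^ (n * p) * ((volume E).toReal / I.vol)) *
            ENNReal.ofReal ((4 ^ n)⁻¹ ^ p * I.vol) := ENNReal.ofReal_mul (by positivity)
      _ ≤ _ := by
        gcongr
        exact ofReal_le_lintegral_maximal_restrict_rpow hp I hyI hy
  · push Not at hmeet
    rw [restrict_compl_eq_zero_of_subset Metric.isOpen_ball.measurableSet
      fun x hx => by simpa using hmeet x (hEI hx)]
    exact zero_le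

/-- The measure `ω(E) = m(E \ B(0,1))` on `ℝⁿ` (Lebesgue measure with the
unit ball removed) is not doubling, but satisfies the `C_p` condition for every
`1 < p < ∞`. -/
theorem stmt_19 (n : ℕ) (hn : 0 < n) :
    let ω : Measure (Fin n → ℝ) := volume.restrict (Metric.ball (0 : Fin n → ℝ) 1)ᶜ
    (¬ ∃ K : ℝ, 0 < K ∧ ∀ I : Cube n, ω I.double.set ≤ ENNReal.ofReal K * ω I.set) ∧
    (∀ p : ℝ, 1 < p → ∃ C > (0:ℝ), ∃ ε > (0:ℝ), ∀ I : Cube n,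
      (∫⁻ x, (maximal (volume.restrict I.set) x) ^ p ∂ω) < ⊤ ∧
      ∀ E : Set (Fin n → ℝ), E ⊆ I.set → IsCompact E →
        ω E ≤ ENNReal.ofReal (C * ((volume E).toReal / I.vol) ^ ε) *
          ∫⁻ x, (maximal (volume.restrict I.set) x) ^ p ∂ω) := by
  intro ω
  constructor
  · rintro ⟨K, -, hK⟩
    obtain ⟨I, hI, hdouble⟩ := exists_cube_restrict_compl_ball_eq_zero_double_ne_zero hn one_pos
    exact hdouble (le_zero_iff.1 ((hK I).trans_eq (by rw [hI, mul_zero])))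
  · intro p hp
    refine ⟨4 ^ (n * p), by positivity, 1, one_pos, fun I =>
      ⟨lintegral_maximal_restrict_rpow_lt_top hn hp I Measure.restrict_le_self, fun E hEI hE => ?_⟩⟩
    simpa only [Real.rpow_one] using restrict_compl_ball_le_mul_lintegral_maximal_restrict_rpow
      (by linarith) I hEI hE.measure_lt_top.ne
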